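/- Let V, W be finite-dimensional complex vector spaces, let u : V → W and w : W → V be linear maps such that w ∘ u + Id_V is invertible, let s : V → V be the unique linear map with spectrum contained in Σ₁ such that exp(2πi·s) = w ∘ u + Id_V, and set x := ψ(s)^{−1} ∘ w. Then ψ(x ∘ u) ∘ x = w. -/

import Mathlib

open Complex

noncomputable section

/-- The set Σ: complex numbers `α` with `-1 ≤ Re α ≤ 0`, `Im α ≥ 0` if `Re α = -1`,
and `Im α < 0` if `Re α = 0`. -/
def SigmaSet : Set ℂ :=
  {α : ℂ | -1 ≤ α.re ∧ α.re ≤ 0 ∧ (α.re = -1 → 0 ≤ α.im) ∧ (α.re = 0 → α.im < 0)}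

/-- The set Σ₁ := Σ + 1. -/
def Sigma1 : Set ℂ := {α : ℂ | α - 1 ∈ SigmaSet}

/-- The constant `2πi`. -/
def twoPiI : ℂ := 2 * Real.pi * Complex.I

/-- The exponential `exp(2πi·f)` of an endomorphism `f`. -/
def expEnd {E : Type*} [NormedAddCommGroup E] [NormedSpace ℂ E] (f : E →L[ℂ] E) :
    E →L[ℂ] E :=
  NormedSpace.exp (twoPiI • f)

/-- The power series `ψ(A) := ∑_{k=1}^∞ ((2πi)^k / k!) A^(k-1)`. It satisfies
`A·ψ(A) = ψ(A)·A = exp(2πi·A) − Id`. -/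
def psiEnd {E : Type*} [NormedAddCommGroup E] [NormedSpace ℂ E] (A : E →L[ℂ] E) :
    E →L[ℂ] E :=
  ∑' k : ℕ, ((twoPiI ^ (k + 1) / (Nat.factorial (k + 1) : ℂ)) • A ^ k)

/-! Since `ψ(s) * s = exp(2πi s) - 1 = w ∘ u`, the map `x ∘ u = ψ(s)⁻¹ ∘ w ∘ u` is `s` itself,
so `ψ(x ∘ u) ∘ x = ψ(s) ∘ ψ(s)⁻¹ ∘ w = w`. The content is the invertibility of `ψ(s)`: its
kernel is `s`-invariant, so it would contain an eigenvector of `s`, on which `ψ(s)` acts by the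
scalar `ψ(λ)`; but `ψ(λ) * λ = exp(2πiλ) - 1` vanishes on `Σ₁` only at `λ = 0`, and `ψ(0) = 2πi`. -/

def psiCoeff (k : ℕ) : ℂ := twoPiI ^ (k + 1) / (Nat.factorial (k + 1) : ℂ)

def psiSeries {𝔸 : Type*} [NormedRing 𝔸] [NormedAlgebra ℂ 𝔸] (a : 𝔸) : 𝔸 :=
  ∑' k : ℕ, psiCoeff k • a ^ k

theorem psiEnd_eq_psiSeries {E : Type*} [NormedAddCommGroup E] [NormedSpace ℂ E]
    (A : E →L[ℂ] E) : psiEnd A = psiSeries A := rfl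

theorem norm_twoPiI : ‖twoPiI‖ = 2 * Real.pi := by
  simp [twoPiI, abs_of_pos Real.pi_pos]

theorem twoPiI_ne_zero : twoPiI ≠ 0 := by
  simp [twoPiI, Real.pi_ne_zero]

theorem norm_psiCoeff (k : ℕ) :
    ‖psiCoeff k‖ = (2 * Real.pi) ^ (k + 1) / (Nat.factorial (k + 1) : ℝ) := by
  rw [psiCoeff, norm_div, norm_pow, norm_twoPiI, Complex.norm_natCast]

section NormedAlgebra

variable {𝔸 : Type*} [NormedRing 𝔸] [NormedAlgebra ℂ 𝔸]

theorem summable_psiCoeff_smul_pow [CompleteSpace 𝔸] (a : 𝔸) :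
    Summable fun k : ℕ => psiCoeff k • a ^ k := by
  refine .of_norm_bounded_eventually_nat
    ((Real.summable_pow_div_factorial (2 * Real.pi * ‖a‖)).mul_left (2 * Real.pi)) ?_
  filter_upwards [Filter.eventually_gt_atTop 0] with k hk
  have hfac : (Nat.factorial k : ℝ) ≤ Nat.factorial (k + 1) := by
    exact_mod_cast Nat.factorial_le k.le_succ
  calc ‖psiCoeff k • a ^ k‖ ≤ ‖psiCoeff k‖ * ‖a‖ ^ k :=
        (norm_smul_le _ _).trans (by gcongr; exact norm_pow_le' a hk)
    _ = 2 * Real.pi * ((2 * Real.pi * ‖a‖) ^ k / Nat.factorial (k + 1)) := by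
        rw [norm_psiCoeff]; ring
    _ ≤ 2 * Real.pi * ((2 * Real.pi * ‖a‖) ^ k / Nat.factorial k) := by
        gcongr

theorem commute_self_psiSeries (a : 𝔸) : Commute a (psiSeries a) :=
  Commute.tsum_right a fun k => ((Commute.refl a).pow_right k).smul_right _

theorem psiSeries_mul_self [CompleteSpace 𝔸] (a : 𝔸) :
    psiSeries a * a = NormedSpace.exp (twoPiI • a) - 1 := by
  have hshift : psiSeries a * a = ∑' k : ℕ, psiCoeff k • a ^ (k + 1) := by
    rw [psiSeries, ← (summable_psiCoeff_smul_pow a).tsum_mul_right]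
    simp only [smul_mul_assoc, pow_succ]
  have hexp : NormedSpace.exp (twoPiI • a) =
      1 + ∑' k : ℕ, psiCoeff k • a ^ (k + 1) := by
    rw [NormedSpace.exp_eq_tsum ℂ]
    beta_reduce
    rw [(NormedSpace.expSeries_summable' (𝕂 := ℂ) (twoPiI • a)).tsum_eq_zero_add]
    simp only [smul_pow, smul_smul, psiCoeff, div_eq_mul_inv, mul_comm]
    simp only [pow_zero, Nat.factorial_zero, Nat.cast_one, inv_one, mul_one, one_smul]
  rw [hshift, hexp, add_sub_cancel_left]

end NormedAlgebra

theorem eq_zero_of_intCast_mem_Sigma1 {n : ℤ} (hn : (n : ℂ) ∈ Sigma1) : n = 0 := by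
  obtain ⟨hlo, hhi, -, hone⟩ := hn
  simp only [sub_re, intCast_re, one_re, sub_im, intCast_im, one_im] at hlo hhi hone
  have hn0 : 0 ≤ n := by exact_mod_cast (by linarith : (0 : ℝ) ≤ n)
  have hn1 : n ≤ 1 := by exact_mod_cast (by linarith : (n : ℝ) ≤ 1)
  rcases (by omega : n = 0 ∨ n = 1) with h | rfl
  · exact h
  · norm_num at hone

theorem psiSeries_ne_zero_of_mem_Sigma1 {z : ℂ} (hz : z ∈ Sigma1) : psiSeries z ≠ 0 := by
  rcases eq_or_ne z 0 with rfl | hz0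
  · rw [psiSeries, tsum_eq_single 0 fun k hk => by simp [zero_pow hk]]
    simpa [psiCoeff] using twoPiI_ne_zero
  intro hψ
  have hexp : Complex.exp (twoPiI * z) = 1 := by
    have := psiSeries_mul_self z
    rw [hψ, zero_mul, eq_comm, sub_eq_zero] at this
    rwa [Complex.exp_eq_exp_ℂ]
  obtain ⟨n, hn⟩ := Complex.exp_eq_one_iff.mp hexp
  have hzn : z = n := mul_left_cancel₀ twoPiI_ne_zero (by rw [hn, twoPiI]; ring)
  subst hzn
  exact hz0 (by exact_mod_cast eq_zero_of_intCast_mem_Sigma1 hz)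

theorem Module.End.exists_hasEigenvector_mem_ker_of_commute {K V : Type*} [Field K]
    [IsAlgClosed K] [AddCommGroup V] [Module K V] [FiniteDimensional K V]
    {f g : Module.End K V} (hfg : Commute f g) (hg : ¬IsUnit g) :
    ∃ μ v, f.HasEigenvector μ v ∧ g v = 0 := by
  have hker : LinearMap.ker g ≠ ⊥ := mt (LinearMap.isUnit_iff_ker_eq_bot g).mpr hg
  have hmaps : Set.MapsTo f (LinearMap.ker g) (LinearMap.ker g) := fun v hv => by
    rw [SetLike.mem_coe, LinearMap.mem_ker] at hv ⊢
    rw [← Module.End.mul_apply, ← hfg.eq, Module.End.mul_apply, hv, map_zero]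
  have : Nontrivial (LinearMap.ker g) := Submodule.nontrivial_iff_ne_bot.mpr hker
  obtain ⟨μ, hμ⟩ := Module.End.exists_eigenvalue (f.restrict hmaps)
  obtain ⟨v, hv⟩ := hμ.exists_hasEigenvector
  refine ⟨μ, v, Module.End.hasEigenvector_iff.mpr ⟨?_, ?_⟩, v.2⟩
  · exact Module.End.mem_eigenspace_iff.mpr (congrArg Subtype.val hv.apply_eq_smul)
  · exact fun h => hv.2 (Subtype.ext h)

section ContinuousLinearMap

variable {E : Type*} [NormedAddCommGroup E] [NormedSpace ℂ E] [CompleteSpace E]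

theorem psiEnd_apply_of_hasEigenvector {s : E →L[ℂ] E} {μ : ℂ} {v : E}
    (hv : Module.End.HasEigenvector (s : Module.End ℂ E) μ v) :
    psiEnd s v = psiSeries μ • v := by
  calc psiEnd s v = ∑' k : ℕ, (psiCoeff k • s ^ k) v :=
        (ContinuousLinearMap.apply ℂ E v).map_tsum (summable_psiCoeff_smul_pow s)
    _ = ∑' k : ℕ, (psiCoeff k • μ ^ k) • v := by
        congr! 2 with k
        rw [smul_apply, smul_assoc, ← hv.pow_apply k, ← ContinuousLinearMap.toLinearMap_pow]
        rfl
    _ = psiSeries μ • v := (summable_psiCoeff_smul_pow μ).tsum_smul_const v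

end ContinuousLinearMap

theorem isUnit_psiEnd {V : Type*} [NormedAddCommGroup V] [NormedSpace ℂ V]
    [FiniteDimensional ℂ V] {s : V →L[ℂ] V} (hs : spectrum ℂ s ⊆ Sigma1) :
    IsUnit (psiEnd s) := by
  rw [ContinuousLinearMap.isUnit_iff_isUnit_toLinearMap]
  by_contra hψ
  have hcomm : Commute (s : Module.End ℂ V) (psiEnd s) :=
    (commute_self_psiSeries s).map ContinuousLinearMap.toLinearMapRingHom
  obtain ⟨μ, v, hv, hψv⟩ := Module.End.exists_hasEigenvector_mem_ker_of_commute hcomm hψ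
  have hμ : μ ∈ Sigma1 := hs <| by
    rw [ContinuousLinearMap.spectrum_eq]
    exact (Module.End.hasEigenvalue_of_hasEigenvector hv).mem_spectrum
  rw [ContinuousLinearMap.coe_coe, psiEnd_apply_of_hasEigenvector hv] at hψv
  exact psiSeries_ne_zero_of_mem_Sigma1 hμ ((smul_eq_zero.mp hψv).resolve_right hv.2)

theorem psi_x_comp_u_comp_x_eq_w_general
    {V W : Type*} [NormedAddCommGroup V] [NormedSpace ℂ V] [FiniteDimensional ℂ V]
    [NormedAddCommGroup W] [NormedSpace ℂ W]
    (u : V →L[ℂ] W) (w : W →L[ℂ] V)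
    (s : V →L[ℂ] V) (hs : spectrum ℂ s ⊆ Sigma1)
    (hes : expEnd s = w.comp u + ContinuousLinearMap.id ℂ V) :
    (psiEnd (((Ring.inverse (psiEnd s)).comp w).comp u)).comp
      ((Ring.inverse (psiEnd s)).comp w) = w := by
  have hψ : IsUnit (psiEnd s) := isUnit_psiEnd hs
  have hwu : w.comp u = psiEnd s * s := by
    rw [psiEnd_eq_psiSeries, psiSeries_mul_self, ← expEnd, hes]
    exact (add_sub_cancel_right _ _).symm
  have hx : ((Ring.inverse (psiEnd s)).comp w).comp u = s := by
    rw [ContinuousLinearMap.comp_assoc, hwu]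
    exact Ring.inverse_mul_cancel_left _ _ hψ
  rw [hx, ← ContinuousLinearMap.comp_assoc]
  exact congrArg (·.comp w) (Ring.mul_inverse_cancel _ hψ)

/-- Let `w∘u + Id` be invertible, `s` the unique endomorphism with spectrum in Σ₁ and
`exp(2πi·s) = w∘u + Id`, and `x := ψ(s)⁻¹ ∘ w`. Then `ψ(x∘u) ∘ x = w`. -/
theorem psi_x_comp_u_comp_x_eq_w
    {V W : Type*} [NormedAddCommGroup V] [NormedSpace ℂ V] [FiniteDimensional ℂ V]
    [NormedAddCommGroup W] [NormedSpace ℂ W] [FiniteDimensional ℂ W]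
    (u : V →L[ℂ] W) (w : W →L[ℂ] V)
    (hinv : IsUnit (w.comp u + ContinuousLinearMap.id ℂ V))
    (s : V →L[ℂ] V) (hs : spectrum ℂ s ⊆ Sigma1)
    (hes : expEnd s = w.comp u + ContinuousLinearMap.id ℂ V) :
    (psiEnd (((Ring.inverse (psiEnd s)).comp w).comp u)).comp
      ((Ring.inverse (psiEnd s)).comp w) = w :=
  psi_x_comp_u_comp_x_eq_w_general u w s hs hes
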